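/- Let x₁, x₂, a₁, a₂, y₁, y₂, b₁, b₂ ∈ ℝ and let M be a real number strictly larger than each of |x₁ - a₁|, |x₂ - a₂|, |y₁ - b₁|, |y₂ - b₂|. Then the implication '(a₁ ≤ x₁ and x₂ ≤ a₂) → (y₁ - b₁)(y₂ - b₂) ≥ 0' holds if and only if there exist u, v, w, t ∈ {0,1} satisfying: x₁ + M(1-u) ≥ a₁; x₁ - M·u < a₁; x₂ ≤ a₂ + M(1-v); x₂ > a₂ - M·v; 0 ≤ u + v - 2t ≤ 1; y₁ - b₁ ≥ -M·w - M(1-t); y₁ - b₁ ≤ M(1-w) + M(1-t); y₂ - b₂ ≥ -M·w - M(1-t); and y₂ - b₂ ≤ M(1-w) + M(1-t). -/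

import Mathlib

/-!
Since every gap is smaller than `M`, each big-M constraint is slack for one value of its binary
variable and decisive for the other. This forces `u` and `v` to be the indicators of `a₁ ≤ x₁`
and `x₂ ≤ a₂`, and `t` their conjunction. When `t = 1` the constraints on `y` say that both
differences are `≥ 0` (`w = 0`) or both are `≤ 0` (`w = 1`); when `t = 0` they are slack.
-/

section BigM

variable {K : Type*} [Field K] [LinearOrder K] [IsStrictOrderedRing K]

theorem exists_binary_indicator (P : Prop) : ∃ u : K, (u = 0 ∨ u = 1) ∧ (u = 1 ↔ P) := by
  by_cases hP : P
  · exact ⟨1, Or.inr rfl, by simp [hP]⟩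
  · exact ⟨0, Or.inl rfl, by simp [hP]⟩

theorem bigM_system_iff_indicator_le {x a M u : K} (hu : u = 0 ∨ u = 1) (h : |x - a| < M) :
    (x + M * (1 - u) ≥ a ∧ x - M * u < a) ↔ (u = 1 ↔ a ≤ x) := by
  obtain ⟨hlo, hhi⟩ := abs_lt.mp h
  rcases hu with rfl | rfl
  · simp only [sub_zero, mul_one, mul_zero, zero_ne_one, false_iff, not_le]
    exact ⟨And.right, fun hlt => ⟨by linarith, hlt⟩⟩
  · simp only [sub_self, mul_zero, add_zero, mul_one, true_iff]
    exact ⟨And.left, fun hle => ⟨hle, by linarith⟩⟩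

theorem bigM_system_iff_indicator_ge {x a M v : K} (hv : v = 0 ∨ v = 1) (h : |x - a| < M) :
    (x ≤ a + M * (1 - v) ∧ x > a - M * v) ↔ (v = 1 ↔ x ≤ a) := by
  have hneg := bigM_system_iff_indicator_le (x := -x) (a := -a) hv
    (by rwa [neg_sub_neg, abs_sub_comm])
  rw [neg_le_neg_iff] at hneg
  rw [← hneg]
  constructor <;> rintro ⟨h₁, h₂⟩ <;> constructor <;> linarith

theorem linearized_and_iff {u v t : K} (hu : u = 0 ∨ u = 1) (hv : v = 0 ∨ v = 1)
    (ht : t = 0 ∨ t = 1) :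
    (0 ≤ u + v - 2 * t ∧ u + v - 2 * t ≤ 1) ↔ (t = 1 ↔ u = 1 ∧ v = 1) := by
  rcases hu with rfl | rfl <;> rcases hv with rfl | rfl <;> rcases ht with rfl | rfl <;> norm_num

theorem exists_bigM_same_sign_iff {p q M t : K} (ht : t = 0 ∨ t = 1) (hp : |p| < M)
    (hq : |q| < M) :
    (∃ w : K, (w = 0 ∨ w = 1) ∧
      p ≥ -(M * w) - M * (1 - t) ∧ p ≤ M * (1 - w) + M * (1 - t) ∧
      q ≥ -(M * w) - M * (1 - t) ∧ q ≤ M * (1 - w) + M * (1 - t)) ↔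
    (t = 1 → p * q ≥ 0) := by
  obtain ⟨hp₁, hp₂⟩ := abs_lt.mp hp
  obtain ⟨hq₁, hq₂⟩ := abs_lt.mp hq
  constructor
  · rintro ⟨w, hw, hpw₁, hpw₂, hqw₁, hqw₂⟩ rfl
    rcases hw with rfl | rfl
    · exact mul_nonneg (by linarith) (by linarith)
    · exact mul_nonneg_of_nonpos_of_nonpos (by linarith) (by linarith)
  · intro h
    rcases ht with rfl | rfl
    · exact ⟨0, Or.inl rfl, by linarith, by linarith, by linarith, by linarith⟩
    rcases mul_nonneg_iff.mp (h rfl) with ⟨hp0, hq0⟩ | ⟨hp0, hq0⟩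
    · exact ⟨0, Or.inl rfl, by linarith, by linarith, by linarith, by linarith⟩
    · exact ⟨1, Or.inr rfl, by linarith, by linarith, by linarith, by linarith⟩

end BigM

/-- A conditional same-sign (product nonnegative) condition is equivalent to a
mixed-integer big-M system (Lemma 3 / `lemma:second`). -/
theorem conditional_product_bigM
    (x₁ x₂ a₁ a₂ y₁ y₂ b₁ b₂ M : ℝ)
    (h₁ : |x₁ - a₁| < M) (h₂ : |x₂ - a₂| < M)
    (h₃ : |y₁ - b₁| < M) (h₄ : |y₂ - b₂| < M) :
    ((a₁ ≤ x₁ ∧ x₂ ≤ a₂) → (y₁ - b₁) * (y₂ - b₂) ≥ 0) ↔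
    ∃ u v w t : ℝ,
      (u = 0 ∨ u = 1) ∧ (v = 0 ∨ v = 1) ∧ (w = 0 ∨ w = 1) ∧ (t = 0 ∨ t = 1) ∧
      x₁ + M * (1 - u) ≥ a₁ ∧
      x₁ - M * u < a₁ ∧
      x₂ ≤ a₂ + M * (1 - v) ∧
      x₂ > a₂ - M * v ∧
      (0 ≤ u + v - 2 * t ∧ u + v - 2 * t ≤ 1) ∧
      y₁ - b₁ ≥ -(M * w) - M * (1 - t) ∧
      y₁ - b₁ ≤ M * (1 - w) + M * (1 - t) ∧
      y₂ - b₂ ≥ -(M * w) - M * (1 - t) ∧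
      y₂ - b₂ ≤ M * (1 - w) + M * (1 - t) := by
  constructor
  · intro h
    obtain ⟨u, hu, hu₁⟩ := exists_binary_indicator (K := ℝ) (a₁ ≤ x₁)
    obtain ⟨v, hv, hv₁⟩ := exists_binary_indicator (K := ℝ) (x₂ ≤ a₂)
    obtain ⟨t, ht, ht₁⟩ := exists_binary_indicator (K := ℝ) (u = 1 ∧ v = 1)
    obtain ⟨w, hw, hy⟩ := (exists_bigM_same_sign_iff ht h₃ h₄).2 fun ht' =>
      h ⟨hu₁.1 (ht₁.1 ht').1, hv₁.1 (ht₁.1 ht').2⟩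
    obtain ⟨cu₁, cu₂⟩ := (bigM_system_iff_indicator_le hu h₁).2 hu₁
    obtain ⟨cv₁, cv₂⟩ := (bigM_system_iff_indicator_ge hv h₂).2 hv₁
    exact ⟨u, v, w, t, hu, hv, hw, ht, cu₁, cu₂, cv₁, cv₂,
      (linearized_and_iff hu hv ht).2 ht₁, hy⟩
  · rintro ⟨u, v, w, t, hu, hv, hw, ht, cu₁, cu₂, cv₁, cv₂, hand, hy⟩ ⟨hx₁, hx₂⟩
    have hu₁ : u = 1 := ((bigM_system_iff_indicator_le hu h₁).1 ⟨cu₁, cu₂⟩).2 hx₁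
    have hv₁ : v = 1 := ((bigM_system_iff_indicator_ge hv h₂).1 ⟨cv₁, cv₂⟩).2 hx₂
    have ht₁ : t = 1 := ((linearized_and_iff hu hv ht).1 hand).2 ⟨hu₁, hv₁⟩
    exact (exists_bigM_same_sign_iff ht h₃ h₄).1 ⟨w, hw, hy⟩ ht₁
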